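/- arXiv:2403.05454 — 4 statements merged into one kernel-verified Lean document; each statement's English description precedes it below -/
import Mathlib

section
/- Let w be a control on [0,T]. Then for every u ∈ (0,T], one has ∫₀^{T−u} w(s, s+u) ds ≤ 2 u · w(0,T). -/
/-!
Superadditivity gives `w(s, s+u) ≤ w(0, s+u) - w(0, s)`, so the integral is bounded by the
telescoping integral `∫_{T-u}^T w(0,·) - ∫_0^u w(0,·) ≤ u · w(0,T)`, since `w(0,·)` is
nonnegative and nondecreasing on `[0,T]`. Monotonicity also makes `w(0,·)` integrable.
-/

open MeasureTheory Set

namespace intervalIntegral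

theorem integral_mono_on_of_nonneg {f g : ℝ → ℝ} {a b : ℝ} (hab : a ≤ b)
    (hf : ∀ x ∈ Icc a b, 0 ≤ f x) (hg : IntervalIntegrable g volume a b)
    (h : ∀ x ∈ Icc a b, f x ≤ g x) :
    ∫ x in a..b, f x ≤ ∫ x in a..b, g x := by
  rw [integral_of_le hab, integral_of_le hab]
  refine integral_mono_of_nonneg ?_ hg.1 ?_ <;>
    refine ae_restrict_of_forall_mem measurableSet_Ioc fun x hx => ?_
  exacts [hf x (Ioc_subset_Icc_self hx), h x (Ioc_subset_Icc_self hx)]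

theorem integral_sub_comp_add_right {E : Type*} [NormedAddCommGroup E] [NormedSpace ℝ E]
    {F : ℝ → E} {a b u : ℝ} (hab : IntervalIntegrable F volume a b)
    (hab_add : IntervalIntegrable F volume (a + u) (b + u))
    (ha_add : IntervalIntegrable F volume (a + u) a) :
    ∫ s in a..b, (F (s + u) - F s) = (∫ s in b..b + u, F s) - ∫ s in a..a + u, F s := by
  rw [integral_sub ((IntervalIntegrable.comp_add_right_iff).2 hab_add) hab, integral_comp_add_right,
    integral_interval_sub_interval_comm' hab_add hab ha_add]

end intervalIntegral

theorem MonotoneOn.intervalIntegral_le_mul {F : ℝ → ℝ} {a b : ℝ} (hF : MonotoneOn F (Icc a b))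
    (hab : a ≤ b) : ∫ s in a..b, F s ≤ (b - a) * F b := by
  have hbound : ∀ s ∈ Icc a b, F s ≤ F b := fun s hs => hF hs (right_mem_Icc.2 hab) hs.2
  calc ∫ s in a..b, F s ≤ ∫ _ in a..b, F b :=
        intervalIntegral.integral_mono_on hab (hF.mono (uIcc_of_le hab).subset).intervalIntegrable
          intervalIntegrable_const hbound
    _ = (b - a) * F b := by rw [intervalIntegral.integral_const, smul_eq_mul]

section Control

variable {T : ℝ} {w : ℝ → ℝ → ℝ}

theorem monotoneOn_control_left (h_nonneg : ∀ s t, 0 ≤ s → s ≤ t → t ≤ T → 0 ≤ w s t)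
    (h_super : ∀ s u t, 0 ≤ s → s ≤ u → u ≤ t → t ≤ T → w s u + w u t ≤ w s t)
    {a : ℝ} (ha : 0 ≤ a) : MonotoneOn (w a) (Icc a T) := by
  intro s hs t ht hst
  linarith [h_super a s t ha hs.1 hst ht.2, h_nonneg s t (ha.trans hs.1) hst ht.2]

theorem integral_control_shift_le_mul (h_nonneg : ∀ s t, 0 ≤ s → s ≤ t → t ≤ T → 0 ≤ w s t)
    (h_super : ∀ s u t, 0 ≤ s → s ≤ u → u ≤ t → t ≤ T → w s u + w u t ≤ w s t)
    {u : ℝ} (hu : 0 ≤ u) (huT : u ≤ T) :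
    ∫ s in (0:ℝ)..(T - u), w s (s + u) ≤ u * w 0 T := by
  have hmono := monotoneOn_control_left h_nonneg h_super le_rfl
  have hint : ∀ {x y}, x ∈ Icc 0 T → y ∈ Icc 0 T → IntervalIntegrable (w 0) volume x y :=
    fun hx hy => (hmono.mono (uIcc_subset_Icc hx hy)).intervalIntegrable
  have hTu : 0 ≤ T - u := by linarith
  have hstart : IntervalIntegrable (w 0) volume 0 (T - u) :=
    hint ⟨le_rfl, by linarith⟩ ⟨hTu, by linarith⟩
  have hshift : IntervalIntegrable (w 0) volume (0 + u) (T - u + u) :=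
    hint ⟨by linarith, by linarith⟩ ⟨by linarith, by linarith⟩
  have hback : IntervalIntegrable (w 0) volume (0 + u) 0 :=
    hint ⟨by linarith, by linarith⟩ ⟨le_rfl, by linarith⟩
  have hinc : ∀ s ∈ Icc 0 (T - u), w s (s + u) ≤ w 0 (s + u) - w 0 s := fun s hs => by
    linarith [h_super 0 s (s + u) le_rfl hs.1 (by linarith) (by linarith [hs.2])]
  calc ∫ s in (0:ℝ)..(T - u), w s (s + u)
      ≤ ∫ s in (0:ℝ)..(T - u), (w 0 (s + u) - w 0 s) :=
        intervalIntegral.integral_mono_on_of_nonneg hTu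
          (fun s hs => h_nonneg s (s + u) hs.1 (by linarith) (by linarith [hs.2]))
          (((IntervalIntegrable.comp_add_right_iff).2 hshift).sub hstart) hinc
    _ = (∫ s in (T - u)..T, w 0 s) - ∫ s in (0:ℝ)..u, w 0 s := by
        simpa using intervalIntegral.integral_sub_comp_add_right hstart hshift hback
    _ ≤ u * w 0 T - 0 := by
        gcongr
        · simpa using (hmono.mono (Icc_subset_Icc_left hTu)).intervalIntegral_le_mul (by linarith)
        · exact intervalIntegral.integral_nonneg hu fun s hs =>
            h_nonneg 0 s le_rfl hs.1 (hs.2.trans huT)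
    _ = u * w 0 T := sub_zero _

end Control

theorem integral_control_shift_le_general
    (T : ℝ) (w : ℝ → ℝ → ℝ)
    (h_nonneg : ∀ s t, 0 ≤ s → s ≤ t → t ≤ T → 0 ≤ w s t)
    (h_super : ∀ s u t, 0 ≤ s → s ≤ u → u ≤ t → t ≤ T →
      w s u + w u t ≤ w s t)
    (u : ℝ) (hu : 0 < u) (huT : u ≤ T) :
    ∫ s in (0:ℝ)..(T - u), w s (s + u) ≤ 2 * u * w 0 T := by
  have hw : 0 ≤ u * w 0 T := mul_nonneg hu.le (h_nonneg 0 T le_rfl (hu.le.trans huT) le_rfl)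
  linarith [integral_control_shift_le_mul h_nonneg h_super hu.le huT]

/-- if `w` is a control on `[0,T]`, then for every `u ∈ (0,T]`,
`∫₀^{T−u} w(s, s+u) ds ≤ 2·u·w(0,T)`. -/
theorem integral_control_shift_le
    (T : ℝ) (hT : 0 ≤ T) (w : ℝ → ℝ → ℝ)
    (h_nonneg : ∀ s t, 0 ≤ s → s ≤ t → t ≤ T → 0 ≤ w s t)
    (h_cont : ContinuousOn (fun q : ℝ × ℝ => w q.1 q.2)
      {q : ℝ × ℝ | 0 ≤ q.1 ∧ q.1 ≤ q.2 ∧ q.2 ≤ T})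
    (h_diag : ∀ s, 0 ≤ s → s ≤ T → w s s = 0)
    (h_super : ∀ s u t, 0 ≤ s → s ≤ u → u ≤ t → t ≤ T →
      w s u + w u t ≤ w s t)
    (u : ℝ) (hu : 0 < u) (huT : u ≤ T) :
    ∫ s in (0:ℝ)..(T - u), w s (s + u) ≤ 2 * u * w 0 T :=
  integral_control_shift_le_general T w h_nonneg h_super u hu huT
end

section
/- Rough Grönwall lemma: Let G : [0,T] → [0,∞) be a path, C, L > 0 constants, κ ≥ 1, w a control on [0,T], and γ an increasing function on the simplex (γ(s',t') ≤ γ(s,t) whenever [s',t'] ⊆ [s,t]). Suppose that G_t − G_s ≤ C · (sup_{r ≤ t} G_r) · w(s,t)^{1/κ} + γ(s,t) for every 0 ≤ s < t ≤ T with w(s,t) ≤ L. Then, with λ := min(1, (L·(2C·e²)^κ)^{-1}), one has sup_{t ∈ [0,T]} G_t ≤ 2 · exp( w(0,T) / (λ L) ) · ( G_0 + γ(0,T) ). -/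
open Set

/-! Put `a := λ L` and `c := C a^{1/κ}`; the choice of `λ` makes `c ≤ 1/(2e²) ≤ 1/9`.
On an interval `[s, u]` with `w(s, u) ≤ a`, the hypothesis bounds `G ρ - G s` by
`c · sup_{[0,ρ]} G + γ(0,T)`; absorbing the `c`-term gives
`sup_{[0,u]} G ≤ r (sup_{[0,s]} G + γ(0,T))` with `r := (1 - c)⁻¹ ≤ 9/8`.
By continuity and superadditivity of `w`, `[0, t]` is covered by `k + 1` such intervals,
`k = ⌊w(0,t)/a⌋`, and iterating yields the factor `(k+1) r^{k+1} ≤ 2 e^k`.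
Since `sSup` of an unbounded set of reals is `0`, boundedness of `G` on `[0, u]` is carried
along the induction. -/

structure IsControl (w : ℝ → ℝ → ℝ) (T : ℝ) : Prop where
  nonneg : ∀ s t, 0 ≤ s → s ≤ t → t ≤ T → 0 ≤ w s t
  continuousOn : ContinuousOn (fun q : ℝ × ℝ => w q.1 q.2)
    {q : ℝ × ℝ | 0 ≤ q.1 ∧ q.1 ≤ q.2 ∧ q.2 ≤ T}
  diag : ∀ s, 0 ≤ s → s ≤ T → w s s = 0
  superadditive : ∀ s u t, 0 ≤ s → s ≤ u → u ≤ t → t ≤ T → w s u + w u t ≤ w s t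

namespace IsControl

variable {w : ℝ → ℝ → ℝ} {T : ℝ}

theorem mono_right (hw : IsControl w T) {s t t' : ℝ} (hs : 0 ≤ s) (hst : s ≤ t) (htt' : t ≤ t')
    (ht' : t' ≤ T) : w s t ≤ w s t' := by
  linarith [hw.superadditive s t t' hs hst htt' ht', hw.nonneg t t' (hs.trans hst) htt' ht']

theorem continuousOn_right (hw : IsControl w T) {s : ℝ} (hs : 0 ≤ s) :
    ContinuousOn (w s) (Icc s T) :=
  hw.continuousOn.comp (continuous_const.prodMk continuous_id).continuousOn
    fun _ hv => ⟨hs, hv.1, hv.2⟩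

theorem induction (hw : IsControl w T) {a : ℝ} (ha : 0 < a) {P : ℕ → ℝ → Prop}
    (base : ∀ u, 0 ≤ u → u ≤ T → w 0 u ≤ a → P 0 u)
    (step : ∀ k s u, 0 ≤ s → s ≤ u → u ≤ T → w s u ≤ a → P k s → P (k + 1) u) :
    ∀ k : ℕ, ∀ u, 0 ≤ u → u ≤ T → w 0 u ≤ (k + 1) * a → P k u := by
  intro k
  induction k with
  | zero => simpa using base
  | succ k ih =>
    intro u hu huT hwu
    have hmem : min (w 0 u) ((k + 1) * a) ∈ Icc (w 0 0) (w 0 u) := by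
      rw [hw.diag 0 le_rfl (hu.trans huT)]
      exact ⟨le_min (hw.nonneg 0 u le_rfl hu huT) (by positivity), min_le_left _ _⟩
    obtain ⟨s, ⟨hs, hsu⟩, hws⟩ :=
      intermediate_value_Icc hu ((hw.continuousOn_right le_rfl).mono (Icc_subset_Icc_right huT))
        hmem
    refine step k s u hs hsu huT ?_ (ih s hs (hsu.trans huT) (hws ▸ min_le_right _ _))
    have hsuper := hw.superadditive 0 s u le_rfl hs hsu huT
    push_cast at hwu
    rcases min_cases (w 0 u) ((k + 1) * a) with ⟨hmin, -⟩ | ⟨hmin, -⟩ <;> linarith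

end IsControl

section RunningSupremum

variable {G : ℝ → ℝ} {s u c g : ℝ}

theorem sSup_image_Icc_le_add_mul_sSup (hs : 0 ≤ s) (hG0 : 0 ≤ G 0) (hc : 0 ≤ c)
    (hg : 0 ≤ g) (hbdd : BddAbove (G '' Icc 0 s))
    (hinc : ∀ ρ, s < ρ → ρ ≤ u → G ρ ≤ G s + c * sSup (G '' Icc 0 ρ) + g)
    {v : ℝ} (hsv : s ≤ v) (hvu : v ≤ u) (hbdd_v : BddAbove (G '' Icc 0 v)) :
    sSup (G '' Icc 0 v) ≤ sSup (G '' Icc 0 s) + c * sSup (G '' Icc 0 v) + g := by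
  have hv : 0 ≤ v := hs.trans hsv
  have hMv : 0 ≤ sSup (G '' Icc 0 v) := hG0.trans (le_csSup hbdd_v ⟨0, ⟨le_rfl, hv⟩, rfl⟩)
  refine csSup_le ⟨G 0, 0, ⟨le_rfl, hv⟩, rfl⟩ (forall_mem_image.2 fun ρ ⟨hρ, hρv⟩ => ?_)
  rcases le_or_gt ρ s with hρs | hρs
  · have := le_csSup hbdd ⟨ρ, ⟨hρ, hρs⟩, rfl⟩
    nlinarith
  · have hMρ : sSup (G '' Icc 0 ρ) ≤ sSup (G '' Icc 0 v) :=
      csSup_le_csSup hbdd_v ⟨G 0, 0, ⟨le_rfl, hρ⟩, rfl⟩ (image_mono (Icc_subset_Icc_right hρv))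
    have hGs := le_csSup hbdd ⟨s, ⟨hs, le_rfl⟩, rfl⟩
    nlinarith [hinc ρ hρs (hρv.trans hvu)]

theorem bddAbove_and_sSup_image_Icc_le_inv_mul (hs : 0 ≤ s) (hsu : s ≤ u) (hG0 : 0 ≤ G 0)
    (hc : 0 ≤ c) (hc1 : c < 1) (hg : 0 ≤ g) (hbdd : BddAbove (G '' Icc 0 s))
    (hinc : ∀ ρ, s < ρ → ρ ≤ u → G ρ ≤ G s + c * sSup (G '' Icc 0 ρ) + g) :
    BddAbove (G '' Icc 0 u) ∧ sSup (G '' Icc 0 u) ≤ (1 - c)⁻¹ * (sSup (G '' Icc 0 s) + g) := by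
  have hMs : G s ≤ sSup (G '' Icc 0 s) := le_csSup hbdd ⟨s, ⟨hs, le_rfl⟩, rfl⟩
  have hMs0 : 0 ≤ sSup (G '' Icc 0 s) := hG0.trans (le_csSup hbdd ⟨0, ⟨le_rfl, hs⟩, rfl⟩)
  have hsup : ∀ v, s ≤ v → v ≤ u → BddAbove (G '' Icc 0 v) →
      sSup (G '' Icc 0 v) ≤ (1 - c)⁻¹ * (sSup (G '' Icc 0 s) + g) := fun v hsv hvu hbdd_v => by
    rw [le_inv_mul_iff₀ (by linarith)]
    linarith [sSup_image_Icc_le_add_mul_sSup hs hG0 hc hg hbdd hinc hsv hvu hbdd_v]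
  have hle : sSup (G '' Icc 0 s) + g ≤ (1 - c)⁻¹ * (sSup (G '' Icc 0 s) + g) :=
    le_mul_of_one_le_left (by positivity) (one_le_inv₀ (by linarith) |>.2 (by linarith))
  have hpt : ∀ ρ ∈ Icc 0 u, G ρ ≤ (1 - c)⁻¹ * (sSup (G '' Icc 0 s) + g) := by
    rintro ρ ⟨hρ, hρu⟩
    rcases le_or_gt ρ s with hρs | hρs
    · linarith [le_csSup hbdd ⟨ρ, ⟨hρ, hρs⟩, rfl⟩]
    by_cases hbdd_ρ : BddAbove (G '' Icc 0 ρ)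
    · exact (le_csSup hbdd_ρ ⟨ρ, ⟨hρ, le_rfl⟩, rfl⟩).trans (hsup ρ hρs.le hρu hbdd_ρ)
    · have := hinc ρ hρs hρu
      rw [Real.sSup_of_not_bddAbove hbdd_ρ, mul_zero] at this
      linarith
  have hbdd_u : BddAbove (G '' Icc 0 u) := ⟨_, forall_mem_image.2 hpt⟩
  exact ⟨hbdd_u, hsup u hsu le_rfl hbdd_u⟩

end RunningSupremum

theorem IsControl.sSup_image_Icc_le_succ_mul_pow {w : ℝ → ℝ → ℝ} {T a c g : ℝ}
    {G : ℝ → ℝ} (hw : IsControl w T) (ha : 0 < a) (hG0 : 0 ≤ G 0) (hc : 0 ≤ c) (hc1 : c < 1)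
    (hg : 0 ≤ g)
    (hinc : ∀ s ρ u, 0 ≤ s → s < ρ → ρ ≤ u → u ≤ T → w s u ≤ a →
      G ρ ≤ G s + c * sSup (G '' Icc 0 ρ) + g)
    (k : ℕ) (u : ℝ) (hu : 0 ≤ u) (huT : u ≤ T) (hwu : w 0 u ≤ (k + 1) * a) :
    BddAbove (G '' Icc 0 u) ∧
      sSup (G '' Icc 0 u) ≤ (k + 1) * (1 - c)⁻¹ ^ (k + 1) * (G 0 + g) := by
  have hr : 1 ≤ (1 - c)⁻¹ := one_le_inv₀ (by linarith) |>.2 (by linarith)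
  refine hw.induction ha (P := fun k u => BddAbove (G '' Icc 0 u) ∧
      sSup (G '' Icc 0 u) ≤ (k + 1) * (1 - c)⁻¹ ^ (k + 1) * (G 0 + g)) ?_ ?_ k u hu huT hwu
  · intro u hu huT hwu
    have h0 : G '' Icc 0 0 = {G 0} := by rw [Icc_self, image_singleton]
    have := bddAbove_and_sSup_image_Icc_le_inv_mul le_rfl hu hG0 hc hc1 hg (h0 ▸ bddAbove_singleton)
      fun ρ hρ hρu => hinc 0 ρ u le_rfl hρ hρu huT hwu
    simpa [h0] using this
  · rintro k s u hs hsu huT hwsu ⟨hbdd, hMs⟩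
    obtain ⟨hbdd_u, hMu⟩ := bddAbove_and_sSup_image_Icc_le_inv_mul hs hsu hG0 hc hc1 hg hbdd
      fun ρ hρ hρu => hinc s ρ u hs hρ hρu huT hwsu
    refine ⟨hbdd_u, hMu.trans ?_⟩
    have hpow : (1 - c)⁻¹ ≤ (1 - c)⁻¹ ^ (k + 2) := le_self_pow₀ hr (by omega)
    have hX : g ≤ G 0 + g := by linarith
    push_cast
    calc (1 - c)⁻¹ * (sSup (G '' Icc 0 s) + g)
        ≤ (1 - c)⁻¹ * ((k + 1) * (1 - c)⁻¹ ^ (k + 1) * (G 0 + g) + g) := by gcongr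
      _ = (k + 1) * (1 - c)⁻¹ ^ (k + 2) * (G 0 + g) + (1 - c)⁻¹ * g := by ring
      _ ≤ (k + 1) * (1 - c)⁻¹ ^ (k + 2) * (G 0 + g) + (1 - c)⁻¹ ^ (k + 2) * (G 0 + g) := by
        gcongr
      _ = (k + 1 + 1) * (1 - c)⁻¹ ^ (k + 1 + 1) * (G 0 + g) := by ring

theorem mul_rpow_min_one_inv_mul_le {C L κ : ℝ} (hC : 0 < C) (hL : 0 < L) (hκ : 0 < κ) :
    C * (min 1 (L * (2 * C * Real.exp 2) ^ κ)⁻¹ * L) ^ (1 / κ) ≤ 1 / 9 := by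
  have hB : 0 < 2 * C * Real.exp 2 := by positivity
  have ha : min 1 (L * (2 * C * Real.exp 2) ^ κ)⁻¹ * L ≤ ((2 * C * Real.exp 2) ^ κ)⁻¹ :=
    calc _ ≤ (L * (2 * C * Real.exp 2) ^ κ)⁻¹ * L := by gcongr; exact min_le_right _ _
      _ = _ := by field_simp
  have he : 9 / 2 ≤ Real.exp 2 := by
    linarith [Real.quadratic_le_exp_of_nonneg (x := 2) (by norm_num)]
  calc C * (min 1 (L * (2 * C * Real.exp 2) ^ κ)⁻¹ * L) ^ (1 / κ)
      ≤ C * (((2 * C * Real.exp 2) ^ κ)⁻¹) ^ (1 / κ) := by gcongr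
    _ = (2 * Real.exp 2)⁻¹ := by
      rw [← Real.inv_rpow (by positivity), one_div, Real.rpow_rpow_inv (inv_nonneg.2 hB.le) hκ.ne']
      field_simp
    _ ≤ 1 / 9 := by rw [one_div]; gcongr; linarith

theorem succ_mul_pow_le_two_mul_exp {r : ℝ} (hr0 : 0 ≤ r) (hr : r ≤ 9 / 8) (n : ℕ) :
    (n + 1) * r ^ (n + 1) ≤ 2 * Real.exp n := by
  have hpow : r ^ (n + 1) ≤ Real.exp ((n + 1) / 8) :=
    calc r ^ (n + 1) ≤ Real.exp (1 / 8) ^ (n + 1) :=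
          pow_le_pow_left₀ hr0 (hr.trans (by linarith [Real.add_one_le_exp (1 / 8)])) _
      _ = Real.exp ((n + 1) / 8) := by rw [← Real.exp_nat_mul]; push_cast; ring_nf
  have hlin : (n : ℝ) + 1 ≤ 2 * Real.exp ((7 * n - 1) / 8) := by
    linarith [Real.add_one_le_exp ((7 * n - 1) / 8 : ℝ), (n.cast_nonneg : (0 : ℝ) ≤ n)]
  calc (n + 1) * r ^ (n + 1) ≤ 2 * Real.exp ((7 * n - 1) / 8) * Real.exp ((n + 1) / 8) :=
        mul_le_mul hlin hpow (by positivity) (by positivity)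
    _ = 2 * Real.exp n := by rw [mul_assoc, ← Real.exp_add]; ring_nf


theorem rough_increment_le {T C κ L a : ℝ} {G : ℝ → ℝ} {w γ : ℝ → ℝ → ℝ} (hw : IsControl w T)
    (hG_nonneg : ∀ t, 0 ≤ t → t ≤ T → 0 ≤ G t) (hC : 0 ≤ C) (hκ : 0 < κ) (haL : a ≤ L)
    (hγ_mono : ∀ s s' t' t, 0 ≤ s → s ≤ s' → s' ≤ t' → t' ≤ t → t ≤ T → γ s' t' ≤ γ s t)
    (hyp : ∀ s t, 0 ≤ s → s < t → t ≤ T → w s t ≤ L →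
      G t - G s ≤ C * sSup (G '' Icc 0 t) * w s t ^ (1 / κ) + γ s t)
    {s ρ u : ℝ} (hs : 0 ≤ s) (hsρ : s < ρ) (hρu : ρ ≤ u) (huT : u ≤ T) (hwa : w s u ≤ a) :
    G ρ ≤ G s + C * a ^ (1 / κ) * sSup (G '' Icc 0 ρ) + γ 0 T := by
  have hρT : ρ ≤ T := hρu.trans huT
  have hwρ : w s ρ ≤ a := (hw.mono_right hs hsρ.le hρu huT).trans hwa
  have hM : 0 ≤ sSup (G '' Icc 0 ρ) :=
    Real.sSup_nonneg (forall_mem_image.2 fun x hx => hG_nonneg x hx.1 (hx.2.trans hρT))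
  have hγ : γ s ρ ≤ γ 0 T := hγ_mono 0 s ρ T le_rfl hs hsρ.le hρT le_rfl
  have hw0 : 0 ≤ w s ρ := hw.nonneg s ρ hs hsρ.le hρT
  calc G ρ ≤ G s + C * sSup (G '' Icc 0 ρ) * w s ρ ^ (1 / κ) + γ s ρ := by
        linarith [hyp s ρ hs hsρ hρT (hwρ.trans haL)]
    _ ≤ G s + C * sSup (G '' Icc 0 ρ) * a ^ (1 / κ) + γ 0 T := by gcongr
    _ = G s + C * a ^ (1 / κ) * sSup (G '' Icc 0 ρ) + γ 0 T := by ring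

/-- rough Grönwall lemma: if `G : [0,T] → [0,∞)` satisfies
`G_t − G_s ≤ C·(sup_{r ≤ t} G_r)·w(s,t)^{1/κ} + γ(s,t)` whenever `w(s,t) ≤ L`, where `w`
is a control and `γ` is increasing on the simplex, then with
`λ = min(1, (L·(2C·e²)^κ)⁻¹)` one has
`sup_{t∈[0,T]} G_t ≤ 2·exp(w(0,T)/(λ·L))·(G_0 + γ(0,T))`. -/
theorem rough_gronwall
    (T : ℝ) (hT : 0 ≤ T) (G : ℝ → ℝ)
    (hG_nonneg : ∀ t, 0 ≤ t → t ≤ T → 0 ≤ G t)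
    (C L κ : ℝ) (hC : 0 < C) (hL : 0 < L) (hκ : 1 ≤ κ)
    (w : ℝ → ℝ → ℝ)
    (h_nonneg : ∀ s t, 0 ≤ s → s ≤ t → t ≤ T → 0 ≤ w s t)
    (h_cont : ContinuousOn (fun q : ℝ × ℝ => w q.1 q.2)
      {q : ℝ × ℝ | 0 ≤ q.1 ∧ q.1 ≤ q.2 ∧ q.2 ≤ T})
    (h_diag : ∀ s, 0 ≤ s → s ≤ T → w s s = 0)
    (h_super : ∀ s u t, 0 ≤ s → s ≤ u → u ≤ t → t ≤ T → w s u + w u t ≤ w s t)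
    (γ : ℝ → ℝ → ℝ)
    (hγ_nonneg : ∀ s t, 0 ≤ s → s ≤ t → t ≤ T → 0 ≤ γ s t)
    (hγ_mono : ∀ s s' t' t, 0 ≤ s → s ≤ s' → s' ≤ t' → t' ≤ t → t ≤ T → γ s' t' ≤ γ s t)
    (hyp : ∀ s t, 0 ≤ s → s < t → t ≤ T → w s t ≤ L →
      G t - G s ≤ C * sSup (G '' Icc 0 t) * w s t ^ (1 / κ) + γ s t) :
    ∀ t, 0 ≤ t → t ≤ T →
      G t ≤ 2 * Real.exp (w 0 T / (min 1 (L * (2 * C * Real.exp 2) ^ κ)⁻¹ * L))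
              * (G 0 + γ 0 T) := by
  intro t ht htT
  have hw : IsControl w T := ⟨h_nonneg, h_cont, h_diag, h_super⟩
  have hκ0 : 0 < κ := zero_lt_one.trans_le hκ
  set a := min 1 (L * (2 * C * Real.exp 2) ^ κ)⁻¹ * L
  have ha : 0 < a := by positivity
  have hc : C * a ^ (1 / κ) ≤ 1 / 9 := mul_rpow_min_one_inv_mul_le hC hL hκ0
  have hr : (1 - C * a ^ (1 / κ))⁻¹ ≤ 9 / 8 := by
    rw [inv_le_comm₀ (by linarith) (by norm_num)]; linarith
  set k := ⌊w 0 t / a⌋₊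
  have hk : w 0 t ≤ (k + 1) * a := by
    have := Nat.lt_floor_add_one (w 0 t / a)
    rw [div_lt_iff₀ ha] at this; linarith
  have hkT : (k : ℝ) ≤ w 0 T / a :=
    (Nat.floor_le (div_nonneg (hw.nonneg 0 t le_rfl ht htT) ha.le)).trans
      (div_le_div_of_nonneg_right (hw.mono_right le_rfl ht htT le_rfl) ha.le)
  obtain ⟨hbdd, hM⟩ := hw.sSup_image_Icc_le_succ_mul_pow ha (hG_nonneg 0 le_rfl hT)
    (by positivity) (by linarith) (hγ_nonneg 0 T le_rfl hT le_rfl)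
    (fun s ρ u hs hsρ hρu huT hwa => rough_increment_le hw hG_nonneg hC.le hκ0
      (mul_le_of_le_one_left hL.le (min_le_left _ _)) hγ_mono hyp hs hsρ hρu huT hwa) k t ht htT hk
  have hX : 0 ≤ G 0 + γ 0 T := add_nonneg (hG_nonneg 0 le_rfl hT) (hγ_nonneg 0 T le_rfl hT le_rfl)
  calc G t ≤ sSup (G '' Icc 0 t) := le_csSup hbdd ⟨t, ⟨ht, le_rfl⟩, rfl⟩
    _ ≤ (k + 1) * (1 - C * a ^ (1 / κ))⁻¹ ^ (k + 1) * (G 0 + γ 0 T) := hM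
    _ ≤ 2 * Real.exp k * (G 0 + γ 0 T) :=
      mul_le_mul_of_nonneg_right (succ_mul_pow_le_two_mul_exp (inv_nonneg.2 (by linarith)) hr k) hX
    _ ≤ 2 * Real.exp (w 0 T / a) * (G 0 + γ 0 T) := by gcongr
end

section
/- Let f : ℝ^d → ℝ^m be twice continuously differentiable with bounded first and second derivatives. Then for any x₁, x₂, x₃, x₄ ∈ ℝ^d, |f(x₁) − f(x₂) − f(x₃) + f(x₄)| ≤ ‖Df‖_∞ · |x₁ − x₂ − x₃ + x₄| + ‖D²f‖_∞ · |x₁ − x₂| · |x₂ − x₄|. -/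
/-!
Put `w = x₁ - x₂`. Then `f x₁ - f x₂ - f x₃ + f x₄` splits as the second difference
`(f (x₂ + w) - f x₂) - (f (x₄ + w) - f x₄)` plus `f (x₄ + w) - f x₃`. The mean value inequality
for `y ↦ f (y + w) - f y`, whose derivative `Df (y + w) - Df y` has norm at most `‖D²f‖_∞ ‖w‖`,
bounds the first term; the mean value inequality for `f` bounds the second, and
`x₄ + w - x₃ = x₁ - x₂ - x₃ + x₄`.
-/

section

variable {E F : Type*} [NormedAddCommGroup E] [NormedSpace ℝ E]
  [NormedAddCommGroup F] [NormedSpace ℝ F]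

theorem norm_fderiv_fderiv_eq_norm_iteratedFDeriv_two (f : E → F) (x : E) :
    ‖fderiv ℝ (fderiv ℝ f) x‖ = ‖iteratedFDeriv ℝ 2 f x‖ := by
  rw [← norm_iteratedFDeriv_fderiv, norm_iteratedFDeriv_one]

theorem norm_sub_le_of_norm_fderiv_le {f : E → F} {C : ℝ} (hf : Differentiable ℝ f)
    (bound : ∀ x, ‖fderiv ℝ f x‖ ≤ C) (x y : E) : ‖f x - f y‖ ≤ C * ‖x - y‖ :=
  convex_univ.norm_image_sub_le_of_norm_fderiv_le (fun z _ => hf z) (fun z _ => bound z)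
    (Set.mem_univ y) (Set.mem_univ x)

theorem norm_second_difference_le {f : E → F} {C : ℝ} (hf : Differentiable ℝ f)
    (hf' : ∀ a b, ‖fderiv ℝ f a - fderiv ℝ f b‖ ≤ C * ‖a - b‖) (w y z : E) :
    ‖f (y + w) - f y - (f (z + w) - f z)‖ ≤ C * ‖w‖ * ‖y - z‖ := by
  have hderiv : ∀ u, HasFDerivAt (fun u => f (u + w) - f u)
      (fderiv ℝ f (u + w) - fderiv ℝ f u) u := fun u =>
    ((hasFDerivAt_comp_add_right w).2 (hf (u + w)).hasFDerivAt).sub (hf u).hasFDerivAt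
  have bound : ∀ u, ‖fderiv ℝ f (u + w) - fderiv ℝ f u‖ ≤ C * ‖w‖ := fun u => by
    simpa using hf' (u + w) u
  exact convex_univ.norm_image_sub_le_of_norm_hasFDerivWithin_le
    (fun u _ => (hderiv u).hasFDerivWithinAt) (fun u _ => bound u)
    (Set.mem_univ z) (Set.mem_univ y)

end

/-- Lemma B.1 of the paper: for `f : ℝ^d → ℝ^m` twice continuously
differentiable with `‖Df‖_∞ ≤ C₁` and `‖D²f‖_∞ ≤ C₂`, and any `x₁,x₂,x₃,x₄`,
`|f(x₁) − f(x₂) − f(x₃) + f(x₄)| ≤ C₁·|x₁−x₂−x₃+x₄| + C₂·|x₁−x₂|·|x₂−x₄|`. -/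
theorem second_order_taylor_rearrangement
    (d m : ℕ) (f : EuclideanSpace ℝ (Fin d) → EuclideanSpace ℝ (Fin m))
    (hf : ContDiff ℝ 2 f) (C₁ C₂ : ℝ)
    (h1 : ∀ x, ‖fderiv ℝ f x‖ ≤ C₁)
    (h2 : ∀ x, ‖iteratedFDeriv ℝ 2 f x‖ ≤ C₂)
    (x₁ x₂ x₃ x₄ : EuclideanSpace ℝ (Fin d)) :
    ‖f x₁ - f x₂ - f x₃ + f x₄‖
      ≤ C₁ * ‖x₁ - x₂ - x₃ + x₄‖ + C₂ * ‖x₁ - x₂‖ * ‖x₂ - x₄‖ := by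
  have hdf : Differentiable ℝ f := hf.differentiable two_ne_zero
  have hdf' : Differentiable ℝ (fderiv ℝ f) :=
    (hf.fderiv_right (m := 1) le_rfl).differentiable one_ne_zero
  have hlip' := norm_sub_le_of_norm_fderiv_le hdf' fun x =>
    (norm_fderiv_fderiv_eq_norm_iteratedFDeriv_two f x).trans_le (h2 x)
  have hsplit : f x₁ - f x₂ - f x₃ + f x₄
      = (f (x₂ + (x₁ - x₂)) - f x₂ - (f (x₄ + (x₁ - x₂)) - f x₄))
        + (f (x₄ + (x₁ - x₂)) - f x₃) := by
    rw [add_sub_cancel]; abel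
  calc ‖f x₁ - f x₂ - f x₃ + f x₄‖
      ≤ ‖f (x₂ + (x₁ - x₂)) - f x₂ - (f (x₄ + (x₁ - x₂)) - f x₄)‖
        + ‖f (x₄ + (x₁ - x₂)) - f x₃‖ := hsplit ▸ norm_add_le _ _
    _ ≤ C₂ * ‖x₁ - x₂‖ * ‖x₂ - x₄‖ + C₁ * ‖x₄ + (x₁ - x₂) - x₃‖ :=
        add_le_add (norm_second_difference_le hdf hlip' _ x₂ x₄)
          (norm_sub_le_of_norm_fderiv_le hdf h1 _ _)
    _ = C₁ * ‖x₁ - x₂ - x₃ + x₄‖ + C₂ * ‖x₁ - x₂‖ * ‖x₂ - x₄‖ := by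
        rw [show x₄ + (x₁ - x₂) - x₃ = x₁ - x₂ - x₃ + x₄ by abel]; ring
end

section
/- Let α ∈ ℝ and f ∈ B^α_{∞,∞}(ℝ^d; ℝ^ℓ). Then the functions b¹(x,y) := f(x), b²(x,y) := f(y), and b³(x,y) := f(x−y) (interpreted as tempered distributions on ℝ^{2d} in the natural way) belong to B^α_{∞,∞}(ℝ^{2d}; ℝ^ℓ), with ‖bⁱ‖_{B^α_{∞,∞}(ℝ^{2d})} ≤ C ‖f‖_{B^α_{∞,∞}(ℝ^d)} for i = 1,2,3 and a constant C depending only on d and α. -/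
/-!
The sup norm on `E × E` makes both projections 1-Lipschitz and `(x, y) ↦ x - y`
2-Lipschitz; precomposing an `α`-Hölder function with a `K`-Lipschitz map multiplies its
Hölder constant by `K ^ α`, so `C = 2 ^ α` works for all three functions.
-/

open scoped NNReal

theorem norm_sub_comp_le_of_lipschitzWith {E F G : Type*} [SeminormedAddCommGroup E]
    [SeminormedAddCommGroup F] [SeminormedAddCommGroup G] {f : F → G} {g : E → F}
    {A α : ℝ} {K : ℝ≥0} (hA : 0 ≤ A) (hα : 0 ≤ α)
    (hf : ∀ x y, ‖f x - f y‖ ≤ A * ‖x - y‖ ^ α) (hg : LipschitzWith K g) (p q : E) :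
    ‖f (g p) - f (g q)‖ ≤ (K : ℝ) ^ α * A * ‖p - q‖ ^ α :=
  calc ‖f (g p) - f (g q)‖ ≤ A * ‖g p - g q‖ ^ α := hf _ _
    _ ≤ A * ((K : ℝ) * ‖p - q‖) ^ α := by
      gcongr
      simpa only [dist_eq_norm] using hg.dist_le_mul p q
    _ = (K : ℝ) ^ α * A * ‖p - q‖ ^ α := by
      rw [Real.mul_rpow K.coe_nonneg (norm_nonneg _)]
      ring

theorem besov_dimension_reduction_general
    (d l : ℕ) (α : ℝ) (hα0 : 0 < α) :
    ∃ C > 0, ∀ (f : EuclideanSpace ℝ (Fin d) → EuclideanSpace ℝ (Fin l)) (A : ℝ),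
      (∀ x, ‖f x‖ ≤ A) →
      (∀ x y, ‖f x - f y‖ ≤ A * ‖x - y‖ ^ α) →
      -- b¹(x,y) = f(x)
      ((∀ p : EuclideanSpace ℝ (Fin d) × EuclideanSpace ℝ (Fin d), ‖f p.1‖ ≤ C * A) ∧
       (∀ p q : EuclideanSpace ℝ (Fin d) × EuclideanSpace ℝ (Fin d),
          ‖f p.1 - f q.1‖ ≤ C * A * ‖p - q‖ ^ α)) ∧
      -- b²(x,y) = f(y)
      ((∀ p : EuclideanSpace ℝ (Fin d) × EuclideanSpace ℝ (Fin d), ‖f p.2‖ ≤ C * A) ∧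
       (∀ p q : EuclideanSpace ℝ (Fin d) × EuclideanSpace ℝ (Fin d),
          ‖f p.2 - f q.2‖ ≤ C * A * ‖p - q‖ ^ α)) ∧
      -- b³(x,y) = f(x−y)
      ((∀ p : EuclideanSpace ℝ (Fin d) × EuclideanSpace ℝ (Fin d),
          ‖f (p.1 - p.2)‖ ≤ C * A) ∧
       (∀ p q : EuclideanSpace ℝ (Fin d) × EuclideanSpace ℝ (Fin d),
          ‖f (p.1 - p.2) - f (q.1 - q.2)‖ ≤ C * A * ‖p - q‖ ^ α)) := by
  refine ⟨2 ^ α, by positivity, fun f A hbound hholder => ?_⟩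
  have hA : 0 ≤ A := (norm_nonneg _).trans (hbound 0)
  have bounded (x) : ‖f x‖ ≤ 2 ^ α * A :=
    (hbound x).trans (le_mul_of_one_le_left hA (Real.one_le_rpow one_le_two hα0.le))
  have holder
      {g : EuclideanSpace ℝ (Fin d) × EuclideanSpace ℝ (Fin d) → EuclideanSpace ℝ (Fin d)}
      (hg : LipschitzWith 2 g) (p q) :
      ‖f (g p) - f (g q)‖ ≤ 2 ^ α * A * ‖p - q‖ ^ α := by
    simpa using norm_sub_comp_le_of_lipschitzWith hA hα0.le hholder hg p q
  exact ⟨⟨fun _ => bounded _, holder (LipschitzWith.prod_fst.weaken one_le_two)⟩,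
    ⟨fun _ => bounded _, holder (LipschitzWith.prod_snd.weaken one_le_two)⟩,
    ⟨fun _ => bounded _, holder ((LipschitzWith.prod_fst.sub LipschitzWith.prod_snd).weaken
      one_add_one_eq_two.le)⟩⟩

/-- Lemma C.1 of the paper, stated in the range `α ∈ (0,1)` where
`B^α_{∞,∞}` coincides with the space of bounded `α`-Hölder functions: if
`f ∈ B^α_{∞,∞}(ℝ^d;ℝ^ℓ)` (with norm bound `A`, i.e. `f` bounded by `A` and `α`-Hölder
with constant `A`), then `b¹(x,y) := f(x)`, `b²(x,y) := f(y)` and `b³(x,y) := f(x−y)`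
belong to `B^α_{∞,∞}(ℝ^{2d};ℝ^ℓ)` with norm at most `C·A`, for a constant `C`
depending only on `d` and `α`. -/
theorem besov_dimension_reduction
    (d l : ℕ) (α : ℝ) (hα0 : 0 < α) (hα1 : α < 1) :
    ∃ C > 0, ∀ (f : EuclideanSpace ℝ (Fin d) → EuclideanSpace ℝ (Fin l)) (A : ℝ),
      (∀ x, ‖f x‖ ≤ A) →
      (∀ x y, ‖f x - f y‖ ≤ A * ‖x - y‖ ^ α) →
      -- b¹(x,y) = f(x)
      ((∀ p : EuclideanSpace ℝ (Fin d) × EuclideanSpace ℝ (Fin d), ‖f p.1‖ ≤ C * A) ∧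
       (∀ p q : EuclideanSpace ℝ (Fin d) × EuclideanSpace ℝ (Fin d),
          ‖f p.1 - f q.1‖ ≤ C * A * ‖p - q‖ ^ α)) ∧
      -- b²(x,y) = f(y)
      ((∀ p : EuclideanSpace ℝ (Fin d) × EuclideanSpace ℝ (Fin d), ‖f p.2‖ ≤ C * A) ∧
       (∀ p q : EuclideanSpace ℝ (Fin d) × EuclideanSpace ℝ (Fin d),
          ‖f p.2 - f q.2‖ ≤ C * A * ‖p - q‖ ^ α)) ∧
      -- b³(x,y) = f(x−y)
      ((∀ p : EuclideanSpace ℝ (Fin d) × EuclideanSpace ℝ (Fin d),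
          ‖f (p.1 - p.2)‖ ≤ C * A) ∧
       (∀ p q : EuclideanSpace ℝ (Fin d) × EuclideanSpace ℝ (Fin d),
          ‖f (p.1 - p.2) - f (q.1 - q.2)‖ ≤ C * A * ‖p - q‖ ^ α)) :=
  besov_dimension_reduction_general d l α hα0
end
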